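/- arXiv:1702.05574 — 2 statements merged into one kernel-verified Lean document; each statement's English description precedes it below -/
import Mathlib

section
/- Let 0 < δ and let g(z) = (1−z)² · δ^{(1+z)/(1−z)} on the open unit disk, where δ^w = exp(w log δ). Then the sum of absolute values of the Taylor coefficients of g is at most 4(log(1/δ) + 3). -/
open Metric

section AuxiliaryGLemmas

open Complex MeasureTheory Real AddCircle

local notation "⟪" x ", " y "⟫" => @inner ℂ _ _ x y

noncomputable def Gd (l : ℝ) (z : ℂ) : ℂ :=
  2 * ((l : ℂ) - (1 - z)) * Complex.exp ((1 + z) / (1 - z) * (l : ℂ))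
lemma re_quot_nonneg {z : ℂ} (hz : ‖z‖ ≤ 1) : 0 ≤ (((1 + z) / (1 - z)).re) := by
  rw [Complex.div_re]
  have h1 : Complex.normSq z ≤ 1 := by
    have := Complex.normSq_eq_norm_sq z
    rw [this]
    nlinarith [norm_nonneg z]
  have : (1 + z).re * (1 - z).re + (1 + z).im * (1 - z).im = 1 - Complex.normSq z := by
    simp [Complex.normSq_apply]; ring
  have h2 : 0 ≤ Complex.normSq (1 - z) := Complex.normSq_nonneg _
  rw [← add_div, this]
  exact div_nonneg (by linarith) h2

lemma exp_bound {l : ℝ} (hl : l ≤ 0) {z : ℂ} (hz : ‖z‖ ≤ 1) :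
    ‖Complex.exp ((1 + z) / (1 - z) * (l : ℂ))‖ ≤ 1 := by
  rw [Complex.norm_exp]
  have : (((1 + z) / (1 - z)) * (l : ℂ)).re = ((1 + z) / (1 - z)).re * l := by
    simp [Complex.mul_re]
  rw [this]
  calc Real.exp _ ≤ Real.exp 0 := by
        apply Real.exp_le_exp.mpr
        exact mul_nonpos_of_nonneg_of_nonpos (re_quot_nonneg hz) hl
    _ = 1 := Real.exp_zero

lemma Gd_bound {l : ℝ} (hl : l ≤ 0) {z : ℂ} (hz : ‖z‖ ≤ 1) :
    ‖Gd l z‖ ≤ 2 * (-l + 2) := by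
  rw [Gd]
  rw [norm_mul, norm_mul]
  have h1 : ‖(2 : ℂ)‖ = 2 := by norm_num
  have h2 : ‖(l : ℂ) - (1 - z)‖ ≤ -l + 2 := by
    calc ‖(l : ℂ) - (1 - z)‖ ≤ ‖(l : ℂ)‖ + ‖1 - z‖ := norm_sub_le _ _
      _ ≤ -l + 2 := by
          have : ‖(l : ℂ)‖ = |l| := by simp [Complex.norm_real]
          have h3 : ‖(1 : ℂ) - z‖ ≤ 2 := by
            calc ‖(1:ℂ) - z‖ ≤ ‖(1:ℂ)‖ + ‖z‖ := norm_sub_le _ _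
              _ ≤ 2 := by
                  have : ‖(1:ℂ)‖ = 1 := by norm_num
                  linarith
          rw [this, abs_of_nonpos hl]
          linarith
  calc ‖(2:ℂ)‖ * ‖(l:ℂ) - (1-z)‖ * ‖_‖ ≤ ‖(2:ℂ)‖ * ‖(l:ℂ) - (1-z)‖ * 1 := by
        apply mul_le_mul_of_nonneg_left (exp_bound hl hz) (by positivity)
    _ ≤ 2 * (-l + 2) := by rw [h1, mul_one]; nlinarith [norm_nonneg ((l:ℂ) - (1-z))]
lemma hasDerivAt_quot {z : ℂ} (hz : z ≠ 1) :
    HasDerivAt (fun z : ℂ => (1 + z) / (1 - z)) (2 / (1 - z) ^ 2) z := by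
  have h1 : (1 : ℂ) - z ≠ 0 := by
    intro h; apply hz; linear_combination -h
  have hu : HasDerivAt (fun z : ℂ => 1 + z) 1 z := by
    simpa using (hasDerivAt_id z).const_add 1
  have hv : HasDerivAt (fun z : ℂ => 1 - z) (-1) z := by
    simpa using (hasDerivAt_id z).const_sub 1
  have := hu.div hv h1
  refine this.congr_deriv ?_
  field_simp
  ring

lemma hasDerivAt_E (l : ℝ) {z : ℂ} (hz : z ≠ 1) :
    HasDerivAt (fun z : ℂ => Complex.exp ((1 + z) / (1 - z) * (l : ℂ)))
      (Complex.exp ((1 + z) / (1 - z) * (l : ℂ)) * (2 / (1 - z) ^ 2 * (l : ℂ))) z := by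
  exact ((hasDerivAt_quot hz).mul_const (l : ℂ)).cexp

lemma hasDerivAt_g (l : ℝ) {z : ℂ} (hz : z ≠ 1) :
    HasDerivAt (fun z : ℂ => (1 - z) ^ 2 * Complex.exp ((1 + z) / (1 - z) * (l : ℂ)))
      (Gd l z) z := by
  have h1 : (1 : ℂ) - z ≠ 0 := by
    intro h; apply hz; linear_combination -h
  have hv : HasDerivAt (fun z : ℂ => 1 - z) (-1) z := by
    simpa using (hasDerivAt_id z).const_sub 1
  have hp : HasDerivAt (fun z : ℂ => (1 - z) ^ 2) (2 * (1 - z) ^ 1 * (-1)) z := hv.pow 2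
  have := hp.mul (hasDerivAt_E l hz)
  refine this.congr_deriv ?_
  rw [Gd]
  field_simp
  ring

lemma differentiableAt_Gd (l : ℝ) {z : ℂ} (hz : z ≠ 1) :
    DifferentiableAt ℂ (Gd l) z := by
  have h1 : DifferentiableAt ℂ (fun z : ℂ => 2 * ((l : ℂ) - (1 - z))) z := by
    fun_prop
  exact h1.mul (hasDerivAt_E l hz).differentiableAt
lemma coeff_eq_fourierCoeff (l : ℝ) {r : ℝ} (hr0 : 0 < r) (hr1 : r < 1) (k : ℕ) :
    haveI : Fact (0 < 2 * π) := ⟨by positivity⟩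
    fourierCoeff (fun x : AddCircle (2 * π) => Gd l ((r : ℂ) * fourier 1 x)) k
      = (iteratedDeriv k (Gd l) 0 / (k.factorial : ℂ)) * (r : ℂ) ^ k := by
  haveI : Fact (0 < 2 * π) := ⟨by positivity⟩
  set R : NNReal := ⟨r, hr0.le⟩ with hRdef
  have hR : (R : ℝ) = r := rfl
  -- power series
  have hd : DifferentiableOn ℂ (Gd l) (closedBall 0 (R : ℝ)) := by
    intro z hz
    refine (differentiableAt_Gd l ?_).differentiableWithinAt
    intro h
    rw [mem_closedBall, dist_zero_right, h] at hz
    simp only [norm_one, hR] at hz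
    linarith
  have hb : HasFPowerSeriesOnBall (Gd l) (cauchyPowerSeries (Gd l) 0 R) 0 R :=
    hd.hasFPowerSeriesOnBall (show (0:NNReal) < R from NNReal.coe_pos.mp hr0)
  -- coefficient = p k 1
  have hcoeff : iteratedDeriv k (Gd l) 0 / (k.factorial : ℂ)
      = cauchyPowerSeries (Gd l) 0 R k (fun _ => (1 : ℂ)) := by
    have h1 := hb.factorial_smul (1 : ℂ) k
    rw [iteratedDeriv_eq_iteratedFDeriv, ← h1]
    rw [nsmul_eq_mul]
    field_simp
    exact mul_div_cancel_left₀ _ (by exact_mod_cast k.factorial_ne_zero)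
  rw [hcoeff, cauchyPowerSeries_apply]
  -- unfold circle integral
  rw [circleIntegral]
  have hπ : (π : ℝ) ≠ 0 := pi_ne_zero
  have hπC : ((π : ℝ) : ℂ) ≠ 0 := by exact_mod_cast hπ
  have hrC : (r : ℂ) ≠ 0 := by exact_mod_cast hr0.ne'
  set J := ∫ x in (0:ℝ)..2*π, Complex.exp (-((k:ℂ)*x*Complex.I)) * Gd l ((r:ℂ) * Complex.exp (x*Complex.I)) with hJ
  have hL : fourierCoeff (fun x : AddCircle (2*π) => Gd l ((r:ℂ) * fourier 1 x)) k
      = ((1/(2*π) : ℝ) : ℂ) * J := by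
    rw [fourierCoeff_eq_intervalIntegral _ _ 0, zero_add, real_smul, hJ]
    congr 1
    apply intervalIntegral.integral_congr
    intro x _
    simp only [smul_eq_mul]
    rw [fourier_coe_apply, fourier_coe_apply]
    have e1 : 2 * (π:ℂ) * Complex.I * ((-(k:ℤ) : ℤ):ℂ) * (x:ℝ) / ((2*π : ℝ):ℂ)
        = -((k:ℂ)*(x:ℝ)*Complex.I) := by
      push_cast
      field_simp
    have e2 : 2 * (π:ℂ) * Complex.I * ((1 : ℤ):ℂ) * (x:ℝ) / ((2*π : ℝ):ℂ)
        = (x:ℝ)*Complex.I := by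
      push_cast
      field_simp
    rw [e1, e2]
  have hRint : (∫ θ in (0:ℝ)..2*π, deriv (circleMap 0 (R:ℝ)) θ •
        ((1/(circleMap 0 (R:ℝ) θ - 0))^k • ((circleMap 0 (R:ℝ) θ - 0)⁻¹ • Gd l (circleMap 0 (R:ℝ) θ))))
      = (Complex.I * ((r:ℂ)^k)⁻¹) * J := by
    rw [hJ, ← intervalIntegral.integral_const_mul]
    apply intervalIntegral.integral_congr
    intro θ _
    have hz : circleMap 0 (R:ℝ) θ = (r:ℂ) * Complex.exp (θ*Complex.I) := by
      rw [hR, circleMap_zero]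
    have hE : Complex.exp ((θ:ℝ)*Complex.I) ≠ 0 := Complex.exp_ne_zero _
    have h2 : Complex.exp (-((k:ℂ)*(θ:ℝ)*Complex.I)) = ((Complex.exp ((θ:ℝ)*Complex.I))⁻¹)^k := by
      rw [inv_pow, ← Complex.exp_nat_mul, ← Complex.exp_neg]
      congr 1
      ring
    simp only [deriv_circleMap, hz, sub_zero, smul_eq_mul, h2]
    field_simp
    rw [one_div, one_div, mul_inv, mul_pow, inv_pow (r:ℂ) k]
    field_simp [pow_ne_zero k hrC]
  rw [hL, hRint, smul_eq_mul]
  have hrk : ((r:ℂ))^k ≠ 0 := pow_ne_zero _ hrC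
  push_cast
  field_simp [Complex.I_ne_zero]

lemma norm_r_fourier {r : ℝ} (hr0 : 0 ≤ r) (x : AddCircle (2 * π))
    [Fact (0 < 2 * π)] : ‖(r : ℂ) * fourier 1 x‖ = r := by
  rw [norm_mul, Complex.norm_real, Real.norm_eq_abs, (abs_of_nonneg hr0 : |r| = r),
    fourier_apply, Circle.norm_coe, mul_one]

lemma bessel_step (l : ℝ) {M : ℝ} (hM : 0 ≤ M)
    (hbound : ∀ z : ℂ, ‖z‖ ≤ 1 → ‖Gd l z‖ ≤ M)
    {r : ℝ} (hr0 : 0 < r) (hr1 : r < 1) (s : Finset ℕ) :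
    ∑ k ∈ s, ‖iteratedDeriv k (Gd l) 0 / (k.factorial : ℂ)‖ ^ 2 * r ^ (2 * k) ≤ M ^ 2 := by
  haveI : Fact (0 < 2 * π) := ⟨by positivity⟩
  set φ : AddCircle (2 * π) → ℂ := fun x => Gd l ((r : ℂ) * fourier 1 x) with hφ
  have hφc : Continuous φ := by
    rw [continuous_iff_continuousAt]
    intro x
    have hne : (r : ℂ) * fourier 1 x ≠ 1 := by
      intro h
      have := norm_r_fourier hr0.le x
      rw [h, norm_one] at this
      linarith
    have hc2 : Continuous (fun y : AddCircle (2*π) => (r:ℂ) * fourier 1 y) :=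
      continuous_const.mul (fourier 1).continuous
    exact ContinuousAt.comp (x := x) ((differentiableAt_Gd l hne).continuousAt) hc2.continuousAt
  have hbφ : ∀ x, ‖φ x‖ ≤ M := fun x => hbound _ (by rw [norm_r_fourier hr0.le x]; linarith)
  have hmem : MemLp φ 2 haarAddCircle := by
    refine ⟨hφc.aestronglyMeasurable, ?_⟩
    refine lt_of_le_of_lt (eLpNorm_le_of_ae_bound (Filter.Eventually.of_forall hbφ)) ?_
    rw [measure_univ, ENNReal.one_rpow, one_mul]
    exact ENNReal.ofReal_lt_top
  set f : Lp ℂ 2 (@haarAddCircle (2*π) _) := hmem.toLp φ with hf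
  have hnormf : ‖f‖ ≤ M := by
    rw [hf, Lp.norm_toLp]
    have h1 := eLpNorm_le_of_ae_bound (μ := haarAddCircle) (p := 2)
      (Filter.Eventually.of_forall hbφ)
    rw [measure_univ, ENNReal.one_rpow, one_mul] at h1
    exact ENNReal.toReal_le_of_le_ofReal hM h1
  have hcoeff_eq : ∀ k : ℤ, fourierCoeff (f : AddCircle (2*π) → ℂ) k = fourierCoeff φ k := by
    intro k
    unfold fourierCoeff
    apply integral_congr_ae
    filter_upwards [hmem.coeFn_toLp] with x hx
    rw [hx]
  have hkey : ∀ k : ℕ, ‖iteratedDeriv k (Gd l) 0 / (k.factorial : ℂ)‖ ^ 2 * r ^ (2*k)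
      = ‖⟪fourierBasis ((k : ℤ)), f⟫‖ ^ 2 := by
    intro k
    rw [← HilbertBasis.repr_apply_apply, fourierBasis_repr, hcoeff_eq, hφ]
    rw [coeff_eq_fourierCoeff l hr0 hr1 k]
    rw [norm_mul, mul_pow, norm_pow, Complex.norm_real, Real.norm_eq_abs,
      (abs_of_nonneg hr0.le : |r| = r), ← pow_mul, mul_comm k 2]
  calc ∑ k ∈ s, ‖iteratedDeriv k (Gd l) 0 / (k.factorial : ℂ)‖ ^ 2 * r ^ (2 * k)
      = ∑ i ∈ s.map ⟨((↑) : ℕ → ℤ), fun a b h => by exact_mod_cast h⟩, ‖⟪fourierBasis i, f⟫‖ ^ 2 := by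
        rw [Finset.sum_map]
        exact Finset.sum_congr rfl fun k _ => hkey k
    _ ≤ ‖f‖ ^ 2 := fourierBasis.orthonormal.sum_inner_products_le f
    _ ≤ M ^ 2 := by nlinarith [norm_nonneg f]
lemma coeff_sq_sum_le (l : ℝ) {M : ℝ} (hM : 0 ≤ M)
    (hbound : ∀ z : ℂ, ‖z‖ ≤ 1 → ‖Gd l z‖ ≤ M) (s : Finset ℕ) :
    ∑ k ∈ s, ‖iteratedDeriv k (Gd l) 0 / (k.factorial : ℂ)‖ ^ 2 ≤ M ^ 2 := by
  have ht : Filter.Tendsto (fun r : ℝ => ∑ k ∈ s, ‖iteratedDeriv k (Gd l) 0 / (k.factorial : ℂ)‖ ^ 2 * r ^ (2*k))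
      (nhdsWithin 1 (Set.Iio 1)) (nhds (∑ k ∈ s, ‖iteratedDeriv k (Gd l) 0 / (k.factorial : ℂ)‖ ^ 2)) := by
    have hc : Continuous (fun r : ℝ => ∑ k ∈ s, ‖iteratedDeriv k (Gd l) 0 / (k.factorial : ℂ)‖ ^ 2 * r ^ (2*k)) := by
      apply continuous_finset_sum
      intro k _
      fun_prop
    have h0 := hc.tendsto 1
    simp only [one_pow, mul_one] at h0
    exact h0.mono_left nhdsWithin_le_nhds
  refine le_of_tendsto ht ?_
  filter_upwards [Ioo_mem_nhdsLT_of_mem (Set.mem_Ioc.mpr ⟨zero_lt_one, le_refl (1:ℝ)⟩)] with r hr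
  exact bessel_step l hM hbound hr.1 hr.2 s

lemma sum_inv_sq_le (N : ℕ) : ∑ k ∈ Finset.range N, (1/((k:ℝ)+1))^2 ≤ 2 := by
  have key : ∀ n : ℕ, 1 ≤ n → ∑ k ∈ Finset.range n, (1/((k:ℝ)+1))^2 ≤ 2 - 1/(n:ℝ) := by
    intro n hn
    induction n with
    | zero => omega
    | succ m ih =>
      rcases Nat.eq_or_lt_of_le hn with h | h
      · simp [← h]
        norm_num
      · have hm : 1 ≤ m := by omega
        have hmpos : (0:ℝ) < m := by exact_mod_cast hm
        rw [Finset.sum_range_succ]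
        have ihm := ih hm
        have h3 : (1/(((m:ℝ)+1)))^2 ≤ 1/((m:ℝ)*((m:ℝ)+1)) := by
          rw [div_pow, one_pow]
          apply one_div_le_one_div_of_le (by positivity)
          nlinarith
        have h4 : 1/((m:ℝ)*((m:ℝ)+1)) = 1/(m:ℝ) - 1/((m:ℝ)+1) := by
          field_simp
          ring
        push_cast
        linarith
  rcases Nat.eq_zero_or_pos N with h | h
  · simp [h]
  · have := key N h
    have hN : (0:ℝ) < N := by exact_mod_cast h
    have : (0:ℝ) ≤ 1/N := by positivity
    linarith [key N h]

/-- For `δ ∈ (0,1)` and `g(z) = (1-z)² δ^{(1+z)/(1-z)}`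
(where `δ^w = exp(w log δ)`), the sum of the absolute values of the Taylor
coefficients of `g` at `0` is at most `4 (log(1/δ) + 3)`. -/
theorem a_norm_of_g_le
    (δ : ℝ) (hδ0 : 0 < δ) (hδ1 : δ < 1)
    (g : ℂ → ℂ)
    (hg : ∀ z : ℂ, g z = (1 - z) ^ 2 * Complex.exp ((1 + z) / (1 - z) * (Real.log δ : ℂ))) :
    Summable (fun n => ‖iteratedDeriv n g 0 / (n.factorial : ℂ)‖) ∧
      ∑' n, ‖iteratedDeriv n g 0 / (n.factorial : ℂ)‖ ≤ 4 * (Real.log (1 / δ) + 3) := by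
  set l := Real.log δ with hldef
  have hl : l < 0 := Real.log_neg hδ0 hδ1
  have hL : Real.log (1/δ) = -l := by rw [one_div, Real.log_inv]
  set M : ℝ := 2*(-l+2) with hMdef
  have hM0 : 0 ≤ M := by rw [hMdef]; nlinarith
  have hbound : ∀ z : ℂ, ‖z‖ ≤ 1 → ‖Gd l z‖ ≤ M := fun z hz => Gd_bound hl.le hz
  -- iterated derivative relation
  have hgd : ∀ n : ℕ, iteratedDeriv (n+1) g 0 = iteratedDeriv n (Gd l) 0 := by
    intro n
    rw [iteratedDeriv_succ']
    apply Filter.EventuallyEq.iteratedDeriv_eq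
    filter_upwards [Metric.ball_mem_nhds (0:ℂ) one_pos] with z hz
    have hz1 : z ≠ 1 := by
      intro h
      rw [mem_ball, dist_zero_right, h] at hz
      simp at hz
    have hgfun : g = fun y => (1-y)^2 * Complex.exp ((1+y)/(1-y)*(l:ℂ)) := funext hg
    rw [hgfun]
    exact (hasDerivAt_g l hz1).deriv
  -- a_0 bound
  have ha0 : ‖iteratedDeriv 0 g 0 / (Nat.factorial 0 : ℂ)‖ ≤ 1 := by
    rw [iteratedDeriv_zero, hg 0]
    have : ((1:ℂ) - 0) ^ 2 * Complex.exp ((1 + 0) / (1 - 0) * (l:ℂ)) = Complex.exp (l:ℂ) := by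
      norm_num
    rw [this]
    simp only [Nat.factorial_zero, Nat.cast_one, div_one]
    rw [Complex.norm_exp]
    simp only [Complex.ofReal_re]
    exact Real.exp_le_one_iff.mpr hl.le
  set c : ℕ → ℝ := fun k => ‖iteratedDeriv k (Gd l) 0 / (k.factorial : ℂ)‖ with hcdef
  have hc0 : ∀ k, 0 ≤ c k := fun k => norm_nonneg _
  have hterm : ∀ k : ℕ, ‖iteratedDeriv (k+1) g 0 / ((k+1).factorial : ℂ)‖
      = c k * (1/((k:ℝ)+1)) := by
    intro k
    rw [hgd k, hcdef]
    simp only [norm_div]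
    rw [Complex.norm_natCast, Complex.norm_natCast, Nat.factorial_succ]
    have hkf : (0:ℝ) < (k.factorial : ℝ) := by exact_mod_cast k.factorial_pos
    push_cast
    field_simp
  -- partial sum bound
  have hpartial : ∀ N : ℕ, ∑ n ∈ Finset.range N, ‖iteratedDeriv n g 0 / (n.factorial : ℂ)‖
      ≤ 4 * (Real.log (1/δ) + 3) := by
    intro N
    have hRHS : (0:ℝ) ≤ 4 * (Real.log (1/δ) + 3) := by rw [hL]; nlinarith
    cases N with
    | zero => simpa using hRHS
    | succ N =>
      rw [Finset.sum_range_succ']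
      have hX : ∑ k ∈ Finset.range N, ‖iteratedDeriv (k+1) g 0 / ((k+1).factorial : ℂ)‖
          = ∑ k ∈ Finset.range N, c k * (1/((k:ℝ)+1)) := by
        exact Finset.sum_congr rfl fun k _ => hterm k
      rw [hX]
      set X := ∑ k ∈ Finset.range N, c k * (1/((k:ℝ)+1)) with hXdef
      have hX0 : 0 ≤ X := Finset.sum_nonneg fun k _ => by positivity
      have hCS := Finset.sum_mul_sq_le_sq_mul_sq (Finset.range N) c (fun k => 1/((k:ℝ)+1))
      have h1 := coeff_sq_sum_le l hM0 hbound (Finset.range N)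
      have h2 := sum_inv_sq_le N
      have hgsum0 : (0:ℝ) ≤ ∑ k ∈ Finset.range N, (1/((k:ℝ)+1))^2 :=
        Finset.sum_nonneg fun k _ => by positivity
      have hX2 : X^2 ≤ M^2 * 2 := by
        calc X^2 ≤ (∑ k ∈ Finset.range N, c k ^2) * ∑ k ∈ Finset.range N, (1/((k:ℝ)+1))^2 := hCS
          _ ≤ M^2 * 2 := by
              apply mul_le_mul h1 h2 hgsum0 (by positivity)
      have hXle : X ≤ 1.5 * M := by nlinarith
      have : X + ‖iteratedDeriv 0 g 0 / ((0:ℕ).factorial : ℂ)‖ ≤ 1.5 * M + 1 := by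
        have := ha0
        simp only [Nat.factorial_zero, Nat.cast_one] at this ⊢
        linarith
      rw [hL]
      rw [hMdef] at this
      linarith
  constructor
  · exact summable_of_sum_range_le (fun n => norm_nonneg _) hpartial
  · exact Real.tsum_le_of_sum_range_le (fun n => norm_nonneg _) hpartial

end AuxiliaryGLemmas
end

section
/- For any d' ≥ d ≥ 1 and 0 ≤ p < 1, the squared Hellinger distance between Bin(d', p) and Bin(d'−d, p) is at most 4p·d²/((1−p)·d'). -/
open Finset Real

/-- The binomial distribution `Bin(n,p)` as a point-mass function on `ℕ`. -/
noncomputable def binomPMF (n : ℕ) (p : ℝ) (k : ℕ) : ℝ :=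
  (n.choose k : ℝ) * p ^ k * (1 - p) ^ (n - k)

lemma binomPMF_eq_zero {n k : ℕ} (h : n < k) (p : ℝ) : binomPMF n p k = 0 := by
  simp [binomPMF, Nat.choose_eq_zero_of_lt h]

lemma binomPMF_pos {n k : ℕ} (h : k ≤ n) {p : ℝ} (hp0 : 0 < p) (hp1 : p < 1) :
    0 < binomPMF n p k := by
  have h1 : (0:ℝ) < n.choose k := by exact_mod_cast Nat.choose_pos h
  have h2 : (0:ℝ) < 1 - p := by linarith
  exact mul_pos (mul_pos h1 (pow_pos hp0 k)) (pow_pos h2 _)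

lemma binomPMF_nonneg (n : ℕ) {p : ℝ} (hp0 : 0 ≤ p) (hp1 : p < 1) (k : ℕ) :
    0 ≤ binomPMF n p k := by
  have h2 : (0:ℝ) < 1 - p := by linarith
  unfold binomPMF
  positivity

lemma binom_sum_core (n : ℕ) (p : ℝ) :
    ∑ k ∈ range (n+1), binomPMF n p k = 1 := by
  have h := add_pow p (1-p) n
  simp only [add_sub_cancel, one_pow] at h
  conv_rhs => rw [h]
  apply Finset.sum_congr rfl
  intro k _
  unfold binomPMF
  ring

lemma binom_sum (n N : ℕ) (h : n ≤ N) (p : ℝ) :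
    ∑ k ∈ range (N+1), binomPMF n p k = 1 := by
  rw [← binom_sum_core n p]
  symm
  apply Finset.sum_subset (Finset.range_subset_range.mpr (by omega))
  intro k _ hk
  simp only [mem_range, not_lt] at hk
  exact binomPMF_eq_zero (by omega) p

lemma binom_mean_core (n : ℕ) (p : ℝ) :
    ∑ k ∈ range (n+1), binomPMF n p k * (k:ℝ) = n * p := by
  cases n with
  | zero => simp [binomPMF]
  | succ m =>
    rw [Finset.sum_range_succ']
    have h0 : binomPMF (m+1) p 0 * ((0:ℕ):ℝ) = 0 := by simp
    rw [h0, add_zero]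
    have key : ∀ i ∈ range (m+1),
        binomPMF (m+1) p (i+1) * ((i+1:ℕ):ℝ)
          = ((m+1:ℕ):ℝ) * p * binomPMF m p i := by
      intro i hi
      simp only [mem_range] at hi
      unfold binomPMF
      have hc : ((m+1).choose (i+1) * (i+1) : ℕ) = ((m+1) * m.choose i : ℕ) := by
        rw [← Nat.add_one_mul_choose_eq]
      have hcc : ((m+1).choose (i+1) : ℝ) * ((i:ℝ)+1) = ((m:ℝ)+1) * (m.choose i) := by
        exact_mod_cast congrArg (Nat.cast : ℕ → ℝ) hc
      have hsub : m + 1 - (i+1) = m - i := by omega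
      rw [hsub]
      push_cast
      rw [pow_succ]
      linear_combination (p ^ i * p * (1-p)^(m-i)) * hcc
    rw [Finset.sum_congr rfl key, ← Finset.mul_sum, binom_sum_core m p]
    push_cast
    ring

lemma binom_mean (n N : ℕ) (h : n ≤ N) (p : ℝ) :
    ∑ k ∈ range (N+1), binomPMF n p k * (k:ℝ) = n * p := by
  rw [← binom_mean_core n p]
  symm
  apply Finset.sum_subset (Finset.range_subset_range.mpr (by omega))
  intro k _ hk
  simp only [mem_range, not_lt] at hk
  rw [binomPMF_eq_zero (by omega) p, zero_mul]

lemma binom_ratio (n k : ℕ) (hk : k ≤ n) (p : ℝ) :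
    (n:ℝ) * (1 - p) * binomPMF (n-1) p k = ((n:ℝ) - k) * binomPMF n p k := by
  rcases eq_or_lt_of_le hk with rfl | hlt
  · rcases Nat.eq_zero_or_pos k with rfl | hkpos
    · simp [binomPMF]
    · rw [binomPMF_eq_zero (by omega) p]
      simp
  · -- k < n, so n ≥ 1
    have hn : 1 ≤ n := by omega
    have h1 : n * (n-1).choose k = n.choose k * (n - k) := by
      have h2 := Nat.add_one_mul_choose_eq (n-1) k
      have h3 := Nat.choose_succ_right_eq n k
      have h4 : (n-1) + 1 = n := by omega
      rw [h4] at h2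
      rw [h2]
      exact h3
    have h1' : (n:ℝ) * ((n-1).choose k : ℝ) = (n.choose k : ℝ) * ((n:ℝ) - k) := by
      have := congrArg (Nat.cast : ℕ → ℝ) h1
      push_cast [Nat.cast_sub hk] at this
      linarith
    unfold binomPMF
    have hsub : n - k = (n - 1 - k) + 1 := by omega
    rw [hsub, pow_succ]
    linear_combination ((1-p) * p ^ k * (1-p)^(n-1-k)) * h1'

lemma binom_step (n : ℕ) (hn : 1 ≤ n) {p : ℝ} (hp0 : 0 < p) (hp1 : p < 1) :
    ∑ k ∈ range (n+1), (√ (binomPMF (n-1) p k) - √ (binomPMF n p k))^2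
      ≤ p / ((n:ℝ) * (1 - p)) := by
  have hq : (0:ℝ) < 1 - p := by linarith
  have hnR : (0:ℝ) < (n:ℝ) := by exact_mod_cast hn
  have hden : (0:ℝ) < (n:ℝ) * (1 - p) := mul_pos hnR hq
  have hterm : ∀ k ∈ range (n+1),
      (√ (binomPMF (n-1) p k) - √ (binomPMF n p k))^2
        ≤ binomPMF (n-1) p k * ((n:ℝ) - k) / ((n:ℝ) * (1-p))
          - 2 * binomPMF (n-1) p k + binomPMF n p k := by
    intro k hk
    simp only [mem_range] at hk
    have hk' : k ≤ n := by omega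
    set P := binomPMF (n-1) p k with hP
    set Q := binomPMF n p k with hQdef
    have hQ : 0 < Q := binomPMF_pos hk' hp0 hp1
    have hPnn : 0 ≤ P := binomPMF_nonneg _ hp0.le hp1 _
    have hsP : √P ^ 2 = P := Real.sq_sqrt hPnn
    have hsQ : √Q ^ 2 = Q := Real.sq_sqrt hQ.le
    have h1 : (√P - √Q)^2 * Q ≤ (P - Q)^2 := by
      have e1 : (P - Q)^2 = ((√P - √Q) * (√P + √Q))^2 := by
        rw [mul_pow]
        nlinarith [hsP, hsQ, Real.sqrt_nonneg P, Real.sqrt_nonneg Q]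
      rw [e1]
      have e2 : Q ≤ (√P + √Q)^2 := by
        nlinarith [hsP, hsQ, Real.sqrt_nonneg P, Real.sqrt_nonneg Q,
          mul_nonneg (Real.sqrt_nonneg P) (Real.sqrt_nonneg Q)]
      calc (√P - √Q)^2 * Q ≤ (√P - √Q)^2 * (√P + √Q)^2 := by
            exact mul_le_mul_of_nonneg_left e2 (sq_nonneg _)
        _ = ((√P - √Q) * (√P + √Q))^2 := by rw [mul_pow]
    have hratio := binom_ratio n k hk' p
    -- P * (n-k)/(n(1-p)) - 2P + Q  ≥ (P-Q)^2/Q ≥ (√P-√Q)^2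
    have h2 : (√P - √Q)^2 ≤ (P - Q)^2 / Q := by
      rw [le_div_iff₀ hQ]; exact h1
    refine h2.trans (le_of_eq ?_)
    field_simp
    linear_combination P * hratio
  refine (Finset.sum_le_sum hterm).trans ?_
  have e1 : ∀ k ∈ range (n+1), binomPMF (n-1) p k * ((n:ℝ) - k) / ((n:ℝ)*(1-p))
      - 2 * binomPMF (n-1) p k + binomPMF n p k
      = ((n:ℝ) * binomPMF (n-1) p k - binomPMF (n-1) p k * k) / ((n:ℝ)*(1-p))
        - 2 * binomPMF (n-1) p k + binomPMF n p k := by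
    intro k _; ring
  rw [Finset.sum_congr rfl e1, Finset.sum_add_distrib, Finset.sum_sub_distrib,
    ← Finset.sum_div, Finset.sum_sub_distrib, ← Finset.mul_sum, ← Finset.mul_sum]
  rw [binom_sum (n-1) n (by omega) p, binom_mean (n-1) n (by omega) p,
    binom_sum n n le_rfl p]
  have hcast : ((n-1:ℕ):ℝ) = (n:ℝ) - 1 := by
    push_cast [Nat.cast_sub hn]; ring
  rw [hcast]
  refine le_of_eq ?_
  field_simp
  ring

lemma sqrt_inv_le (a : ℕ) : 1/√((a:ℝ)+1) ≤ 2*(√((a:ℝ)+1) - √(a:ℝ)) := by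
  have hb : (0:ℝ) < √((a:ℝ)+1) := Real.sqrt_pos.mpr (by positivity)
  rw [div_le_iff₀ hb]
  have h1 : √((a:ℝ)+1)^2 = (a:ℝ)+1 := Real.sq_sqrt (by positivity)
  have h2 : √((a:ℝ))^2 = (a:ℝ) := Real.sq_sqrt (by positivity)
  nlinarith [sq_nonneg (√((a:ℝ)+1) - √(a:ℝ))]

/-- For `d' ≥ d ≥ 1` and `0 ≤ p < 1`,
`H²(Bin(d',p), Bin(d'-d,p)) ≤ 4 p d² / ((1-p) d')`. -/
theorem hellinger_binomial_shift
    (d d' : ℕ) (hd : 1 ≤ d) (hdd : d ≤ d') (p : ℝ) (hp0 : 0 ≤ p) (hp1 : p < 1) :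
    (∑' k : ℕ, (Real.sqrt (binomPMF d' p k) - Real.sqrt (binomPMF (d' - d) p k)) ^ 2)
      ≤ 4 * p * (d : ℝ) ^ 2 / ((1 - p) * d') := by
  have hLHS : (∑' k : ℕ, (√(binomPMF d' p k) - √(binomPMF (d'-d) p k))^2)
      = ∑ k ∈ range (d'+1), (√(binomPMF d' p k) - √(binomPMF (d'-d) p k))^2 := by
    apply tsum_eq_sum
    intro k hk
    simp only [mem_range, not_lt] at hk
    rw [binomPMF_eq_zero (by omega) p, binomPMF_eq_zero (by omega) p]
    simp
  rw [hLHS]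
  rcases eq_or_lt_of_le hp0 with hp0' | hp0'
  · -- p = 0
    have hz : ∀ k ∈ range (d'+1),
        (√(binomPMF d' p k) - √(binomPMF (d'-d) p k))^2 = 0 := by
      intro k _
      have : ∀ n : ℕ, binomPMF n p k = if k = 0 then 1 else 0 := by
        intro n
        cases k with
        | zero => simp [binomPMF, ← hp0']
        | succ j => simp [binomPMF, ← hp0', zero_pow]
      rw [this d', this (d'-d)]
      simp
    rw [Finset.sum_eq_zero hz, ← hp0']
    positivity
  · -- 0 < p
    have hq : (0:ℝ) < 1 - p := by linarith
    have hd'pos : 0 < d' := by omega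
    have hd'R : (0:ℝ) < (d':ℝ) := by exact_mod_cast hd'pos
    set m := d' - d with hm
    have hmd : m + d = d' := by omega
    set v : ℕ → EuclideanSpace ℝ (Fin (d'+1)) :=
      (fun n => WithLp.toLp 2 (fun i => √(binomPMF n p i))) with hv
    have hdist2 : ∀ a b : ℕ, dist (v a) (v b) ^ 2
        = ∑ k ∈ range (d'+1), (√(binomPMF a p k) - √(binomPMF b p k))^2 := by
      intro a b
      rw [EuclideanSpace.dist_eq, Real.sq_sqrt (by positivity)]
      rw [← Fin.sum_univ_eq_sum_range
        (fun k => (√(binomPMF a p k) - √(binomPMF b p k))^2) (d'+1)]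
      apply Finset.sum_congr rfl
      intro i _
      simp only [hv, WithLp.ofLp_toLp]
      rw [Real.dist_eq, sq_abs]
    have hA : ∀ n, n + 1 ≤ d' → dist (v n) (v (n+1)) ^ 2 ≤ p / (((n:ℝ)+1) * (1-p)) := by
      intro n hn
      rw [hdist2]
      have hext : ∑ k ∈ range (d'+1), (√(binomPMF n p k) - √(binomPMF (n+1) p k))^2
          = ∑ k ∈ range ((n+1)+1), (√(binomPMF n p k) - √(binomPMF (n+1) p k))^2 := by
        symm
        apply Finset.sum_subset (Finset.range_subset_range.mpr (by omega))
        intro k _ hk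
        simp only [mem_range, not_lt] at hk
        rw [binomPMF_eq_zero (by omega) p, binomPMF_eq_zero (by omega) p]
        simp
      rw [hext]
      have := binom_step (n+1) (by omega) hp0' hp1
      simpa using this
    have hB : ∀ n, n + 1 ≤ d' →
        dist (v n) (v (n+1)) ≤ √(p/(1-p)) * (1/√((n:ℝ)+1)) := by
      intro n hn
      have h1 : dist (v n) (v (n+1)) ≤ √(p / (((n:ℝ)+1)*(1-p))) := by
        rw [show dist (v n) (v (n+1)) = √(dist (v n) (v (n+1))^2) by
          rw [Real.sqrt_sq dist_nonneg]]
        exact Real.sqrt_le_sqrt (hA n hn)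
      refine h1.trans (le_of_eq ?_)
      have hne1 : ((n:ℝ)+1) ≠ 0 := by positivity
      have hne2 : (1-p) ≠ 0 := ne_of_gt hq
      rw [show p / (((n:ℝ)+1)*(1-p)) = (p/(1-p)) * (1/((n:ℝ)+1)) by
        field_simp]
      rw [Real.sqrt_mul (by positivity)]
      congr 1
      rw [one_div, one_div, Real.sqrt_inv]
    have hchain : dist (v m) (v d') ≤ ∑ j ∈ range d, dist (v (m+j)) (v (m+j+1)) := by
      have h := dist_le_range_sum_dist (fun j => v (m + j)) d
      simpa [hmd, add_assoc] using h
    have hsum : ∑ j ∈ range d, dist (v (m+j)) (v (m+j+1))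
        ≤ √(p/(1-p)) * (2 * (d:ℝ) / √(d':ℝ)) := by
      have step2 : ∀ j ∈ range d, dist (v (m+j)) (v (m+j+1))
          ≤ √(p/(1-p)) * (2*(√(((m+j:ℕ):ℝ)+1) - √((m+j:ℕ):ℝ))) := by
        intro j hj
        simp only [mem_range] at hj
        refine (hB (m+j) (by omega)).trans ?_
        exact mul_le_mul_of_nonneg_left (sqrt_inv_le (m+j)) (Real.sqrt_nonneg _)
      refine (Finset.sum_le_sum step2).trans ?_
      rw [← Finset.mul_sum]
      apply mul_le_mul_of_nonneg_left _ (Real.sqrt_nonneg _)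
      have htel : ∑ j ∈ range d, 2*(√(((m+j:ℕ):ℝ)+1) - √((m+j:ℕ):ℝ))
          = 2*√(((m+d:ℕ):ℝ)) - 2*√(((m:ℕ):ℝ)) := by
        have h := Finset.sum_range_sub (fun j => 2*√(((m+j:ℕ):ℝ))) d
        simp only [Nat.add_zero] at h
        rw [← h]
        apply Finset.sum_congr rfl
        intro j _
        push_cast
        ring
      rw [htel, hmd]
      have hsd : (0:ℝ) < √(d':ℝ) := Real.sqrt_pos.mpr hd'R
      have hs : ((m:ℕ):ℝ) ≤ √((m:ℕ):ℝ) * √(d':ℝ) := by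
        calc ((m:ℕ):ℝ) = √((m:ℕ):ℝ) * √((m:ℕ):ℝ) :=
              (Real.mul_self_sqrt (by positivity)).symm
          _ ≤ √((m:ℕ):ℝ) * √(d':ℝ) := by
              apply mul_le_mul_of_nonneg_left _ (Real.sqrt_nonneg _)
              apply Real.sqrt_le_sqrt
              exact_mod_cast Nat.le_of_lt_succ (by omega)
      have hsq : √(d':ℝ) * √(d':ℝ) = (d':ℝ) := Real.mul_self_sqrt hd'R.le
      have hmdR : ((m:ℕ):ℝ) + (d:ℝ) = (d':ℝ) := by exact_mod_cast hmd
      have key : (2*√(d':ℝ) - 2*√((m:ℕ):ℝ)) * √(d':ℝ) ≤ 2*(d:ℝ) := by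
        nlinarith [hs, hsq]
      calc 2*√(d':ℝ) - 2*√((m:ℕ):ℝ)
          = ((2*√(d':ℝ) - 2*√((m:ℕ):ℝ)) * √(d':ℝ))/√(d':ℝ) := by field_simp
        _ ≤ 2*(d:ℝ)/√(d':ℝ) := by gcongr
    have hfin : dist (v m) (v d') ≤ √(p/(1-p)) * (2*(d:ℝ)/√(d':ℝ)) := hchain.trans hsum
    have hsq2 : dist (v m) (v d')^2 ≤ (√(p/(1-p)) * (2*(d:ℝ)/√(d':ℝ)))^2 :=
      pow_le_pow_left₀ dist_nonneg hfin 2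
    have hrw : ∑ k ∈ range (d'+1), (√(binomPMF d' p k) - √(binomPMF m p k))^2
        = dist (v d') (v m)^2 := (hdist2 d' m).symm
    rw [hrw, dist_comm]
    refine hsq2.trans (le_of_eq ?_)
    rw [mul_pow, Real.sq_sqrt (by positivity), div_pow, Real.sq_sqrt hd'R.le]
    field_simp
    ring
end
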